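/- arXiv:2308.14919 — 2 statements merged into one kernel-verified Lean document; each statement's English description precedes it below -/
import Mathlib

section
/- Cover time bound: Let (X_t)_{t≥0} be a Markov chain on a finite state space S of size S with τ_s < ∞ for all s, and δ ∈ (0,1). Then the cover time C := inf{ t : {X_0, …, X_t} = S } satisfies, with probability at least 1 − δ, C ≤ e · (max_{s∈S} τ_s) · log( e·S/δ ). -/
open MeasureTheory ProbabilityTheory Filter
open scoped ENNReal ENat

noncomputable section

/-- `avoidProb P s t x`: the probability that a Markov chain with transition kernel `P`
started at `x` avoids state `s` during the next `t` steps. -/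
def avoidProb {S : Type*} [Fintype S] [DecidableEq S] (P : S → S → ℝ≥0∞) (s : S) :
    ℕ → S → ℝ≥0∞
  | 0, _ => 1
  | t + 1, x => ∑ y ∈ Finset.univ.erase s, P x y * avoidProb P s t y

/-- Expected first return time to `s` of a chain with kernel `P` started at `x`. -/
def expRet {S : Type*} [Fintype S] [DecidableEq S] (P : S → S → ℝ≥0∞) (s x : S) : ℝ≥0∞ :=
  ∑' t : ℕ, avoidProb P s t x

/-- Maximal expected hitting time `τ_s = max_{x} E_x[H_s^+]`. -/
def maxHit {S : Type*} [Fintype S] [DecidableEq S] (P : S → S → ℝ≥0∞) (s : S) : ℝ≥0∞ :=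
  ⨆ x, expRet P s x

/-- The cover time `C = inf { t : {X_0, …, X_t} = S }` of the process `X`. -/
def coverTime {S Ω : Type*} (X : ℕ → Ω → S) (ω : Ω) : ℕ∞ :=
  ⨅ (t : ℕ) (_ : ∀ s : S, ∃ i ≤ t, X i ω = s), (t : ℕ∞)

/-! Let `b_s(t)` be the largest probability, over starting states, that the chain misses `s` at
times `1, …, t`. Restarting the chain shows `b_s(t + n) ≤ b_s(t) b_s(n)`, and Markov's inequality
gives `T · b_s(T) ≤ τ_s - 1`, so a block of `T ≈ e (τ_s - 1)` steps costs a factor `1/e` and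
`b_s(t) ≤ exp (1 - t / (e (τ_s - 1) + 1))`. By the Markov property this bounds the probability
that the chain misses `s` at times `1, …, t`; for `t = ⌊e τ log (e S / δ)⌋` it is at most `δ / S`,
and a union bound over the `S` states finishes. -/

lemma le_pow_of_submultiplicative {b : ℕ → ℝ≥0∞} (h0 : b 0 ≤ 1)
    (hmul : ∀ m n, b (m + n) ≤ b m * b n) (T k : ℕ) : b (k * T) ≤ b T ^ k := by
  induction k with
  | zero => simpa using h0
  | succ k ih => rw [Nat.succ_mul, pow_succ]; exact (hmul _ _).trans (by gcongr)

lemma le_exp_of_submultiplicative {b : ℕ → ℝ≥0∞} (hanti : Antitone b) (h0 : b 0 ≤ 1)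
    (hmul : ∀ m n, b (m + n) ≤ b m * b n) {T : ℕ} (hT : 0 < T)
    (hbT : b T ≤ ENNReal.ofReal (Real.exp (-1))) (t : ℕ) :
    b t ≤ ENNReal.ofReal (Real.exp (1 - t / T)) := by
  set k := t / T
  have htk : (t : ℝ) / T ≤ k + 1 := by
    rw [div_le_iff₀ (by positivity)]
    exact_mod_cast (Nat.lt_div_mul_add hT).le.trans_eq (by ring)
  calc b t ≤ b (k * T) := hanti (Nat.div_mul_le_self t T)
    _ ≤ b T ^ k := le_pow_of_submultiplicative h0 hmul T k
    _ ≤ ENNReal.ofReal (Real.exp (-1)) ^ k := by gcongr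
    _ = ENNReal.ofReal (Real.exp (-k)) := by
        rw [← ENNReal.ofReal_pow (Real.exp_pos _).le, ← Real.exp_nat_mul, mul_neg_one]
    _ ≤ ENNReal.ofReal (Real.exp (1 - t / T)) := by gcongr; linarith

section AvoidProb

variable {S : Type*} [Fintype S] [DecidableEq S] {P : S → S → ℝ≥0∞} {s : S}

def avoidSup (P : S → S → ℝ≥0∞) (s : S) (t : ℕ) : ℝ≥0∞ :=
  ⨆ x, avoidProb P s t x

lemma avoidProb_le_one (hP : ∀ x, ∑ y, P x y ≤ 1) (t : ℕ) (x : S) : avoidProb P s t x ≤ 1 := by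
  induction t generalizing x with
  | zero => simp [avoidProb]
  | succ t ih =>
    calc ∑ y ∈ Finset.univ.erase s, P x y * avoidProb P s t y
        ≤ ∑ y ∈ Finset.univ.erase s, P x y := by gcongr with y; exact mul_le_of_le_one_right' (ih y)
      _ ≤ ∑ y, P x y := Finset.sum_le_sum_of_subset (Finset.erase_subset _ _)
      _ ≤ 1 := hP x

lemma antitone_avoidProb (hP : ∀ x, ∑ y, P x y ≤ 1) (x : S) :
    Antitone fun t ↦ avoidProb P s t x := by
  suffices h : ∀ t x, avoidProb P s (t + 1) x ≤ avoidProb P s t x from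
    antitone_nat_of_succ_le fun t ↦ h t x
  intro t
  induction t with
  | zero => exact avoidProb_le_one hP 1
  | succ t ih => intro x; exact Finset.sum_le_sum fun y _ ↦ mul_le_mul_right (ih y) _

lemma avoidProb_add_le (t n : ℕ) (x : S) :
    avoidProb P s (t + n) x ≤ avoidProb P s t x * avoidSup P s n := by
  induction t generalizing x with
  | zero => simpa [avoidProb, avoidSup] using le_iSup (avoidProb P s n ·) x
  | succ t ih =>
    rw [Nat.add_right_comm]
    calc ∑ y ∈ Finset.univ.erase s, P x y * avoidProb P s (t + n) y
        ≤ ∑ y ∈ Finset.univ.erase s, P x y * (avoidProb P s t y * avoidSup P s n) := by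
          gcongr with y; exact ih y
      _ = avoidProb P s (t + 1) x * avoidSup P s n := by
          simp only [avoidProb, Finset.sum_mul, mul_assoc]

lemma avoidSup_add_le (t n : ℕ) : avoidSup P s (t + n) ≤ avoidSup P s t * avoidSup P s n :=
  iSup_le fun x ↦ (avoidProb_add_le t n x).trans (by gcongr; exact le_iSup (avoidProb P s t ·) x)

lemma antitone_avoidSup (hP : ∀ x, ∑ y, P x y ≤ 1) : Antitone (avoidSup P s) :=
  fun _ _ hmn ↦ iSup_mono fun x ↦ antitone_avoidProb hP x hmn

lemma avoidSup_le_one (hP : ∀ x, ∑ y, P x y ≤ 1) (t : ℕ) : avoidSup P s t ≤ 1 :=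
  iSup_le (avoidProb_le_one hP t)

lemma one_le_maxHit : 1 ≤ maxHit P s :=
  le_iSup_of_le s (by simpa [avoidProb, expRet] using ENNReal.le_tsum (f := (avoidProb P s · s)) 0)

lemma one_le_of_maxHit_le_ofReal {r : ℝ} (hr : maxHit P s ≤ ENNReal.ofReal r) : 1 ≤ r :=
  ENNReal.one_le_ofReal.mp (one_le_maxHit.trans hr)

lemma one_add_mul_avoidSup_le (hP : ∀ x, ∑ y, P x y ≤ 1) (T : ℕ) :
    1 + T * avoidSup P s T ≤ maxHit P s := by
  have : Nonempty S := ⟨s⟩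
  rw [avoidSup, ENNReal.mul_iSup, ENNReal.add_iSup]
  refine iSup_mono fun x ↦ ?_
  calc 1 + T * avoidProb P s T x
      = avoidProb P s 0 x + ∑ _k ∈ Finset.range T, avoidProb P s T x := by
        simp [avoidProb, Finset.sum_const, nsmul_eq_mul]
    _ ≤ avoidProb P s 0 x + ∑ k ∈ Finset.range T, avoidProb P s (k + 1) x := by
        gcongr with k hk
        exact antitone_avoidProb hP x (Finset.mem_range.mp hk)
    _ = ∑ k ∈ Finset.range (T + 1), avoidProb P s k x := by rw [Finset.sum_range_succ', add_comm]
    _ ≤ expRet P s x := ENNReal.sum_le_tsum _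

lemma avoidSup_le_exp_neg_one (hP : ∀ x, ∑ y, P x y ≤ 1) {r : ℝ}
    (hr : maxHit P s ≤ ENNReal.ofReal r) {T : ℕ} (hT : 0 < T) (hT_ge : Real.exp 1 * (r - 1) ≤ T) :
    avoidSup P s T ≤ ENNReal.ofReal (Real.exp (-1)) := by
  have hfin : avoidSup P s T ≠ ⊤ := ne_top_of_le_ne_top ENNReal.one_ne_top (avoidSup_le_one hP T)
  set β := (avoidSup P s T).toReal
  have hβ : 0 ≤ β := ENNReal.toReal_nonneg
  have hTβ : 1 + T * β ≤ r := by
    have := (one_add_mul_avoidSup_le hP T).trans hr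
    rwa [← ENNReal.ofReal_toReal hfin, ← ENNReal.ofReal_natCast,
      ← ENNReal.ofReal_mul (by positivity), ← ENNReal.ofReal_one,
      ← ENNReal.ofReal_add zero_le_one (by positivity),
      ENNReal.ofReal_le_ofReal_iff (by linarith [one_le_of_maxHit_le_ofReal hr])] at this
  have hT0 : (0 : ℝ) < T := by exact_mod_cast hT
  rw [← ENNReal.ofReal_toReal hfin, Real.exp_neg, ← one_div]
  refine ENNReal.ofReal_le_ofReal ((le_div_iff₀ (Real.exp_pos 1)).mpr ?_)
  -- `e T β ≤ e (r - 1) ≤ T`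
  nlinarith [mul_le_mul_of_nonneg_left hTβ (Real.exp_pos 1).le]

lemma avoidSup_le_exp (hP : ∀ x, ∑ y, P x y ≤ 1) {r : ℝ} (hr : maxHit P s ≤ ENNReal.ofReal r)
    (t : ℕ) :
    avoidSup P s t ≤ ENNReal.ofReal (Real.exp (1 - t / (Real.exp 1 * (r - 1) + 1))) := by
  have hr1 := one_le_of_maxHit_le_ofReal hr
  set T := max ⌈Real.exp 1 * (r - 1)⌉₊ 1
  have hT : 0 < T := lt_max_of_lt_right one_pos
  have hT_ge : Real.exp 1 * (r - 1) ≤ T :=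
    (Nat.le_ceil _).trans (by exact_mod_cast le_max_left _ _)
  have hT_le : (T : ℝ) ≤ Real.exp 1 * (r - 1) + 1 := by
    have := Nat.ceil_lt_add_one (by positivity : 0 ≤ Real.exp 1 * (r - 1))
    simp only [T, Nat.cast_max, Nat.cast_one, max_le_iff]
    constructor <;> nlinarith [Real.one_le_exp zero_le_one]
  refine (le_exp_of_submultiplicative (antitone_avoidSup hP) (avoidSup_le_one hP 0)
    avoidSup_add_le hT (avoidSup_le_exp_neg_one hP hr hT hT_ge) t).trans ?_
  gcongr

end AvoidProb

section MarkovChain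

variable {S Ω : Type*}

def historySet (X : ℕ → Ω → S) {m : ℕ} (h : Fin (m + 1) → S) : Set Ω :=
  {ω | ∀ i : Fin (m + 1), X i ω = h i}

def avoidEvent (X : ℕ → Ω → S) (s : S) (m t : ℕ) : Set Ω :=
  {ω | ∀ i, m < i → i ≤ m + t → X i ω ≠ s}

lemma historySet_snoc (X : ℕ → Ω → S) {m : ℕ} (h : Fin (m + 1) → S) (y : S) :
    historySet X (Fin.snoc h y : Fin (m + 2) → S) = X (m + 1) ⁻¹' {y} ∩ historySet X h := by
  ext ω
  simp only [historySet, Set.mem_inter_iff, Set.mem_preimage, Set.mem_singleton_iff,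
    Set.mem_ofPred_eq, Fin.forall_fin_succ', Fin.snoc_last, Fin.snoc_castSucc, Fin.val_castSucc,
    Fin.val_last]
  exact and_comm

lemma historySet_const (X : ℕ → Ω → S) (x : S) :
    historySet X (fun _ : Fin 1 ↦ x) = X 0 ⁻¹' {x} := by
  ext ω
  simp [historySet]

lemma historySet_inter_avoidEvent_succ_subset [DecidableEq S] [Fintype S] (X : ℕ → Ω → S) (s : S)
    {m : ℕ} (h : Fin (m + 1) → S) (t : ℕ) :
    historySet X h ∩ avoidEvent X s m (t + 1) ⊆
      ⋃ y ∈ Finset.univ.erase s, historySet X (Fin.snoc h y : Fin (m + 2) → S) ∩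
        avoidEvent X s (m + 1) t := by
  intro ω ⟨hω, hav⟩
  simp only [Set.mem_iUnion, Finset.mem_erase, Finset.mem_univ, and_true, historySet_snoc]
  exact ⟨X (m + 1) ω, hav _ (by omega) (by omega), ⟨rfl, hω⟩,
    fun i hi hit ↦ hav i (by omega) (by omega)⟩

variable [MeasurableSpace Ω]

def IsMarkovChain (μ : Measure Ω) (X : ℕ → Ω → S) (P : S → S → ℝ≥0∞) : Prop :=
  ∀ (m : ℕ) (h : Fin (m + 1) → S) (y : S),
    μ (X (m + 1) ⁻¹' {y} ∩ historySet X h) = P (h (Fin.last m)) y * μ (historySet X h)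

variable [Fintype S] [DecidableEq S] {μ : Measure Ω} {X : ℕ → Ω → S} {P : S → S → ℝ≥0∞}

lemma IsMarkovChain.measure_historySet_inter_avoidEvent_le (hX : IsMarkovChain μ X P) (s : S)
    (t : ℕ) {m : ℕ} (h : Fin (m + 1) → S) :
    μ (historySet X h ∩ avoidEvent X s m t) ≤
      avoidProb P s t (h (Fin.last m)) * μ (historySet X h) := by
  induction t generalizing m with
  | zero => simpa [avoidProb] using measure_mono Set.inter_subset_left
  | succ t ih =>
    calc μ (historySet X h ∩ avoidEvent X s m (t + 1))
        ≤ ∑ y ∈ Finset.univ.erase s,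
            μ (historySet X (Fin.snoc h y : Fin (m + 2) → S) ∩ avoidEvent X s (m + 1) t) :=
          (measure_mono (historySet_inter_avoidEvent_succ_subset X s h t)).trans
            (measure_biUnion_finset_le _ _)
      _ ≤ ∑ y ∈ Finset.univ.erase s,
            avoidProb P s t y * (P (h (Fin.last m)) y * μ (historySet X h)) := by
          gcongr with y
          have := ih (Fin.snoc h y : Fin (m + 2) → S)
          rw [Fin.snoc_last, historySet_snoc, hX m h y] at this
          rwa [historySet_snoc]
      _ = avoidProb P s (t + 1) (h (Fin.last m)) * μ (historySet X h) := by
          simp only [avoidProb, Finset.sum_mul]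
          exact Finset.sum_congr rfl fun y _ ↦ by ring

lemma IsMarkovChain.measure_avoidEvent_le [MeasurableSpace S] [MeasurableSingletonClass S]
    [IsProbabilityMeasure μ] (hX : IsMarkovChain μ X P) (hX₀ : Measurable (X 0)) (s : S) (t : ℕ) :
    μ (avoidEvent X s 0 t) ≤ avoidSup P s t := by
  have hcover : avoidEvent X s 0 t ⊆
      ⋃ x ∈ Finset.univ, historySet X (fun _ : Fin 1 ↦ x) ∩ avoidEvent X s 0 t := by
    intro ω hω
    simp only [Set.mem_iUnion, Finset.mem_univ, exists_true_left, historySet_const]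
    exact ⟨X 0 ω, rfl, hω⟩
  calc μ (avoidEvent X s 0 t)
      ≤ ∑ x, μ (historySet X (fun _ : Fin 1 ↦ x) ∩ avoidEvent X s 0 t) :=
        (measure_mono hcover).trans (measure_biUnion_finset_le _ _)
    _ ≤ ∑ x, avoidSup P s t * μ (X 0 ⁻¹' {x}) := by
        gcongr with x
        rw [← historySet_const]
        exact (hX.measure_historySet_inter_avoidEvent_le s t _).trans
          (by gcongr; exact le_iSup (avoidProb P s t ·) x)
    _ = avoidSup P s t := by
        rw [← Finset.mul_sum, sum_measure_preimage_singleton _ fun x _ ↦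
          hX₀ (measurableSet_singleton x)]
        simp

end MarkovChain

lemma natCast_floor_le_ofReal (x : ℝ) : ((⌊x⌋₊ : ℕ) : ℝ≥0∞) ≤ ENNReal.ofReal x := by
  rw [← ENNReal.ofReal_natCast, ENNReal.ofReal_le_ofReal_iff']
  rcases le_total 0 x with hx | hx
  · exact Or.inl (Nat.floor_le hx)
  · exact Or.inr (by simp [Nat.floor_of_nonpos hx])

lemma coverTime_le_ofReal {S Ω : Type*} {X : ℕ → Ω → S} {ω : Ω} {B : ℝ}
    (h : ∀ s, ∃ i ≤ ⌊B⌋₊, X i ω = s) : (coverTime X ω : ℝ≥0∞) ≤ ENNReal.ofReal B :=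
  (ENat.toENNReal_le.mpr (iInf₂_le _ h)).trans (natCast_floor_le_ofReal B)

lemma measure_compl_forall_visited_le {S Ω : Type*} [Fintype S] [MeasurableSpace Ω]
    {μ : Measure Ω} {X : ℕ → Ω → S} {t : ℕ} {ε : ℝ≥0∞}
    (h : ∀ s, μ (avoidEvent X s 0 t) ≤ ε / Fintype.card S) :
    μ {ω | ∀ s, ∃ i ≤ t, X i ω = s}ᶜ ≤ ε := by
  have hsub : {ω | ∀ s, ∃ i ≤ t, X i ω = s}ᶜ ⊆ ⋃ s, avoidEvent X s 0 t := by
    intro ω hω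
    simp only [Set.mem_compl_iff, Set.mem_ofPred_eq, not_forall, not_exists, not_and] at hω
    obtain ⟨s, hs⟩ := hω
    exact Set.mem_iUnion.mpr ⟨s, fun i _ hit ↦ hs i (by omega)⟩
  calc μ {ω | ∀ s, ∃ i ≤ t, X i ω = s}ᶜ ≤ ∑ s, μ (avoidEvent X s 0 t) :=
        (measure_mono hsub).trans (measure_iUnion_fintype_le _ _)
    _ ≤ ∑ _s : S, ε / Fintype.card S := Finset.sum_le_sum fun s _ ↦ h s
    _ ≤ ε := by
        rw [Finset.sum_const, Finset.card_univ, nsmul_eq_mul]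
        exact ENNReal.mul_div_le

lemma ofReal_one_sub_le_measure {Ω : Type*} [MeasurableSpace Ω] {μ : Measure Ω}
    [IsProbabilityMeasure μ] {A : Set Ω} {δ : ℝ} (hδ : 0 ≤ δ) (h : μ Aᶜ ≤ ENNReal.ofReal δ) :
    ENNReal.ofReal (1 - δ) ≤ μ A := by
  rw [ENNReal.ofReal_sub 1 hδ, ENNReal.ofReal_one, tsub_le_iff_right]
  calc 1 = μ (A ∪ Aᶜ) := by simp
    _ ≤ μ A + μ Aᶜ := measure_union_le _ _
    _ ≤ μ A + ENNReal.ofReal δ := by gcongr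

lemma exp_one_sub_floor_div_le {n r δ : ℝ} (hn : 1 ≤ n) (hr : 1 ≤ r) (hδ0 : 0 < δ)
    (hδ1 : δ < 1) :
    Real.exp (1 - ⌊Real.exp 1 * r * Real.log (Real.exp 1 * n / δ)⌋₊ / (Real.exp 1 * (r - 1) + 1))
      ≤ δ / n := by
  set L := Real.log (Real.exp 1 * n / δ)
  have he : 2 ≤ Real.exp 1 := by linarith [Real.add_one_le_exp 1]
  have hL : 1 ≤ L := by
    rw [Real.le_log_iff_exp_le (by positivity), le_div_iff₀ hδ0]
    nlinarith
  have hD : 0 < Real.exp 1 * (r - 1) + 1 := by nlinarith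
  -- `⌊e r L⌋₊ > e r L - 1 ≥ L (e (r - 1) + 1)` because `(e - 1) L ≥ 1`
  have hfloor : L * (Real.exp 1 * (r - 1) + 1) ≤ ⌊Real.exp 1 * r * L⌋₊ := by
    nlinarith [Nat.lt_floor_add_one (Real.exp 1 * r * L)]
  calc Real.exp (1 - ⌊Real.exp 1 * r * L⌋₊ / (Real.exp 1 * (r - 1) + 1))
      ≤ Real.exp (1 - L) := by
        gcongr
        rwa [le_div_iff₀ hD]
    _ = δ / n := by
        rw [Real.exp_sub, Real.exp_log (by positivity)]
        field_simp

theorem stmt8_general {S : Type*} [Fintype S] [DecidableEq S] [MeasurableSpace S]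
    [MeasurableSingletonClass S]
    {Ω : Type*} [MeasurableSpace Ω] (μ : Measure Ω) [IsProbabilityMeasure μ]
    (X : ℕ → Ω → S) (hX : ∀ t, Measurable (X t))
    (P : S → S → ℝ≥0∞) (hrow : ∀ x, ∑ y, P x y = 1)
    (hmarkov : ∀ (t : ℕ) (h : Fin (t + 1) → S) (s' : S),
      μ {ω | X (t + 1) ω = s' ∧ ∀ i : Fin (t + 1), X i.val ω = h i}
        = P (h (Fin.last t)) s' * μ {ω | ∀ i : Fin (t + 1), X i.val ω = h i})
    (hτ : ∀ s, maxHit P s ≠ ⊤) (δ : ℝ) (hδ0 : 0 < δ) (hδ1 : δ < 1) :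
    μ {ω | (coverTime X ω : ℝ≥0∞)
        ≤ ENNReal.ofReal
            (Real.exp 1 * (⨆ s, maxHit P s).toReal
              * Real.log (Real.exp 1 * (Fintype.card S) / δ))}
      ≥ ENNReal.ofReal (1 - δ) := by
  have hM : IsMarkovChain μ X P := hmarkov
  have hP : ∀ x, ∑ y, P x y ≤ 1 := fun x ↦ (hrow x).le
  set r := (⨆ s, maxHit P s).toReal
  set t := ⌊Real.exp 1 * r * Real.log (Real.exp 1 * Fintype.card S / δ)⌋₊
  have hτ_le (s : S) : maxHit P s ≤ ENNReal.ofReal r := by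
    rw [ENNReal.ofReal_toReal (iSup_ne_top hτ)]
    exact le_iSup (maxHit P) s
  have hmiss (s : S) : μ (avoidEvent X s 0 t) ≤ ENNReal.ofReal δ / Fintype.card S := by
    have hr := one_le_of_maxHit_le_ofReal (hτ_le s)
    have hn : (1 : ℝ) ≤ Fintype.card S := by exact_mod_cast Fintype.card_pos_iff.mpr ⟨s⟩
    calc μ (avoidEvent X s 0 t) ≤ avoidSup P s t := hM.measure_avoidEvent_le (hX 0) s t
      _ ≤ ENNReal.ofReal (Real.exp (1 - t / (Real.exp 1 * (r - 1) + 1))) :=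
          avoidSup_le_exp hP (hτ_le s) t
      _ ≤ ENNReal.ofReal (δ / Fintype.card S) :=
          ENNReal.ofReal_le_ofReal (exp_one_sub_floor_div_le hn hr hδ0 hδ1)
      _ = ENNReal.ofReal δ / Fintype.card S := by
          rw [ENNReal.ofReal_div_of_pos (by positivity), ENNReal.ofReal_natCast]
  refine ofReal_one_sub_le_measure hδ0.le ((measure_mono ?_).trans
    (measure_compl_forall_visited_le hmiss))
  exact Set.compl_subset_compl.mpr fun ω ↦ coverTime_le_ofReal

/-- with probability at least `1 - δ`,
the cover time satisfies `C ≤ e · (max_s τ_s) · log (e·S/δ)`. -/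
theorem stmt8 {S : Type*} [Fintype S] [DecidableEq S] [Nonempty S] [MeasurableSpace S]
    [MeasurableSingletonClass S]
    {Ω : Type*} [MeasurableSpace Ω] (μ : Measure Ω) [IsProbabilityMeasure μ]
    (X : ℕ → Ω → S) (hX : ∀ t, Measurable (X t))
    (P : S → S → ℝ≥0∞) (hrow : ∀ x, ∑ y, P x y = 1)
    (hmarkov : ∀ (t : ℕ) (h : Fin (t + 1) → S) (s' : S),
      μ {ω | X (t + 1) ω = s' ∧ ∀ i : Fin (t + 1), X i.val ω = h i}
        = P (h (Fin.last t)) s' * μ {ω | ∀ i : Fin (t + 1), X i.val ω = h i})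
    (hτ : ∀ s, maxHit P s ≠ ⊤) (δ : ℝ) (hδ0 : 0 < δ) (hδ1 : δ < 1) :
    μ {ω | (coverTime X ω : ℝ≥0∞)
        ≤ ENNReal.ofReal
            (Real.exp 1 * (⨆ s, maxHit P s).toReal
              * Real.log (Real.exp 1 * (Fintype.card S) / δ))}
      ≥ ENNReal.ofReal (1 - δ) :=
  stmt8_general μ X hX P hrow hmarkov hτ δ hδ0 hδ1
end
end

section
/- MEHC under potential-based reward shaping changes by at most a factor of two: Let M = (S, A, p, r) be a bounded MDP with rewards in [0, r_max], finite maximum expected hitting cost κ(M) < ∞, and unsaturated optimal average reward ρ*(M) < r_max. Then for any potential φ : S → ℝ such that the shaped MDP M^φ remains [0, r_max]-bounded, (1/2)·κ(M) ≤ κ(M^φ) ≤ 2·κ(M). -/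
open scoped ENNReal

noncomputable section

/-- The probability that a Markov chain with transition kernel `Q` started at `s`
traverses exactly the initial path segment `path`. -/
def pathProb {S : Type*} [DecidableEq S] (Q : S → S → ℝ≥0∞) (s : S) {t : ℕ}
    (path : Fin (t + 1) → S) : ℝ≥0∞ :=
  (if path 0 = s then 1 else 0) * ∏ i : Fin t, Q (path i.castSucc) (path i.succ)

/-- The expected hitting time `E[h_{s→s'}]` of `s'` from `s` for the kernel `Q`,
via `E[h] = ∑_t P[h > t]`, where `h > t` iff the path avoids `s'` up to time `t`. -/
def hitTimeE {S : Type*} [Fintype S] [DecidableEq S] (Q : S → S → ℝ≥0∞) (s s' : S) :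
    ℝ≥0∞ :=
  ∑' t : ℕ, ∑ path : Fin (t + 1) → S,
    if ∀ i, path i ≠ s' then pathProb Q s path else 0

/-- The expected hitting cost `E[∑_{t=0}^{h_{s→s'}-1} c(s_t)]` of `s'` from `s`
for the kernel `Q` and per-state cost `c`. -/
def hitCostE {S : Type*} [Fintype S] [DecidableEq S] (Q : S → S → ℝ≥0∞) (c : S → ℝ≥0∞)
    (s s' : S) : ℝ≥0∞ :=
  ∑' t : ℕ, ∑ path : Fin (t + 1) → S,
    if ∀ i, path i ≠ s' then pathProb Q s path * c (path (Fin.last t)) else 0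

/-- The state-transition kernel induced by following policy `π` in an MDP with
transition function `p`. -/
def polKernel {S A : Type*} (p : S → A → S → ℝ≥0∞) (π : S → A) : S → S → ℝ≥0∞ :=
  fun s s' => p s (π s) s'

/-- The diameter `D(M) = max_{s,s'} min_π E[h_{s→s'}(M,π)]` of an MDP. -/
def diam {S A : Type*} [Fintype S] [DecidableEq S] (p : S → A → S → ℝ≥0∞) : ℝ≥0∞ :=
  ⨆ s, ⨆ s', ⨅ π : S → A, hitTimeE (polKernel p π) s s'

/-- The maximum expected hitting cost
`κ(M) = max_{s,s'} min_π E[∑_{t=0}^{h_{s→s'}(M,π)-1} (r_max - r_t)]` of an MDP with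
mean rewards `rbar`. -/
def mehc {S A : Type*} [Fintype S] [DecidableEq S] (p : S → A → S → ℝ≥0∞) (rmax : ℝ)
    (rbar : S → A → ℝ) : ℝ≥0∞ :=
  ⨆ s, ⨆ s', ⨅ π : S → A,
    hitCostE (polKernel p π) (fun x => ENNReal.ofReal (rmax - rbar x (π x))) s s'

open Filter

/-- The expected reward collected at step `t` when following policy `π` from state `s`. -/
def expRewardAt {S A : Type*} [Fintype S] [DecidableEq S] (p : S → A → S → ℝ≥0∞)
    (rbar : S → A → ℝ) (π : S → A) (s : S) (t : ℕ) : ℝ :=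
  ∑ path : Fin (t + 1) → S,
    (pathProb (polKernel p π) s path).toReal
      * rbar (path (Fin.last t)) (π (path (Fin.last t)))

/-- The running average `T ↦ (1/T)·E[∑_{t=0}^{T-1} r_t]` of expected rewards. -/
def avgSeq {S A : Type*} [Fintype S] [DecidableEq S] (p : S → A → S → ℝ≥0∞)
    (rbar : S → A → ℝ) (π : S → A) (s : S) (T : ℕ) : ℝ :=
  (1 / (T : ℝ)) * ∑ t ∈ Finset.range T, expRewardAt p rbar π s t

/-- The average reward (gain) `ρ(M, π, s)` (the limit of the running averages, which
exists for stationary policies on finite MDPs, expressed as a `limsup`). -/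
def gain {S A : Type*} [Fintype S] [DecidableEq S] (p : S → A → S → ℝ≥0∞)
    (rbar : S → A → ℝ) (π : S → A) (s : S) : ℝ :=
  Filter.limsup (avgSeq p rbar π s) atTop

/-- The optimal average reward `ρ*(M) = max_s max_π ρ(M, π, s)`. -/
def optGain {S A : Type*} [Fintype S] [DecidableEq S] (p : S → A → S → ℝ≥0∞)
    (rbar : S → A → ℝ) : ℝ :=
  ⨆ s : S, ⨆ π : S → A, gain p rbar π s

/-- The mean rewards of the PBRS-shaped MDP `M^φ`. -/
def shapedRbar {S A : Type*} [Fintype S] (p : S → A → S → ℝ≥0∞) (rbar : S → A → ℝ)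
    (φ : S → ℝ) : S → A → ℝ :=
  fun s a => rbar s a - φ s + ∑ s', (p s a s').toReal * φ s'

/-!
Fix a policy `π` with transition matrix `P` and per-step cost `c = r_max - r̄(·, π ·)`. Shaping
replaces `c` by `c + φ - P φ`, so for the chain killed on hitting `s'` the expected shaped cost
telescopes to the unshaped one plus `φ s - φ s'`, provided the chain reaches `s'` almost surely.
Shaped costs are nonnegative, so the same identity for the pair `(s', s)` gives
`φ s - φ s' ≤ κ(M)`, whence `κ(M^φ) ≤ 2 κ(M)`; the lower bound is this inequality for `M^φ`
and `-φ`. Policies with infinite hitting cost satisfy both bounds trivially.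

Almost sure absorption comes from `ρ* < r_max`: otherwise some state would incur zero expected
cost at every step and have gain `r_max`. Hence there are `N` and `β > 0` such that the chain
collects expected cost at least `β` within any window of `N` steps unless it is killed
meanwhile, and finiteness of the expected cost of the killed chain forces its survival
probability to `0`.
-/

open Matrix Filter Topology Finset

namespace Matrix

variable {n : Type*} [Fintype n] {M : Matrix n n ℝ}

theorem mulVec_mono_of_nonneg (hM : ∀ i j, 0 ≤ M i j) {f g : n → ℝ} (h : f ≤ g) :
    M *ᵥ f ≤ M *ᵥ g := fun i =>
  Finset.sum_le_sum fun j _ => mul_le_mul_of_nonneg_left (h j) (hM i j)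

theorem abs_mulVec_apply_le (hM : ∀ i j, 0 ≤ M i j) (f : n → ℝ) (i : n) :
    |(M *ᵥ f) i| ≤ ‖f‖ * (M *ᵥ 1) i := by
  have hf : -(‖f‖ • 1 : n → ℝ) ≤ f ∧ f ≤ ‖f‖ • 1 := by
    constructor <;> intro j <;> simp [(abs_le.1 (norm_le_pi_norm f j : |f j| ≤ ‖f‖))]
  rw [abs_le]
  constructor
  · simpa [mulVec_neg, mulVec_smul] using mulVec_mono_of_nonneg hM hf.1 i
  · simpa [mulVec_smul] using mulVec_mono_of_nonneg hM hf.2 i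

theorem mulVec_nonneg_of_nonneg (hM : ∀ i j, 0 ≤ M i j) {f : n → ℝ} (hf : 0 ≤ f) :
    0 ≤ M *ᵥ f := by
  simpa using mulVec_mono_of_nonneg hM hf

variable [DecidableEq n]

theorem abs_mulVec_apply_le_of_mem_rowStochastic (hM : M ∈ rowStochastic ℝ n) (f : n → ℝ)
    (i : n) : |(M *ᵥ f) i| ≤ ‖f‖ := by
  simpa [one_vecMul_of_mem_rowStochastic hM] using
    abs_mulVec_apply_le (M := M) (fun _ _ => nonneg_of_mem_rowStochastic hM) f i

theorem mulVec_const_of_mem_rowStochastic (hM : M ∈ rowStochastic ℝ n) (a : ℝ) :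
    M *ᵥ (fun _ => a) = fun _ => a := by
  calc M *ᵥ (fun _ => a) = a • (M *ᵥ 1) := by rw [← mulVec_smul]; congr 1; ext; simp
    _ = fun _ => a := by rw [one_vecMul_of_mem_rowStochastic hM]; ext; simp

section Killed

-- `K` is a sub-Markov kernel dominated by the stochastic `P`: `(K ^ k *ᵥ 1) s` is the
-- probability that the chain started at `s` has not been killed by time `k`.
variable {P K : Matrix n n ℝ}

theorem mulVec_one_le_of_le_rowStochastic (hP : P ∈ rowStochastic ℝ n)
    (hKP : ∀ i j, K i j ≤ P i j) : K *ᵥ 1 ≤ 1 := by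
  refine le_of_le_of_eq (fun i => ?_) (one_vecMul_of_mem_rowStochastic hP)
  simp only [mulVec, dotProduct, Pi.one_apply, mul_one]
  exact Finset.sum_le_sum fun j _ => hKP i j

theorem antitone_pow_mulVec_one_apply (hP : P ∈ rowStochastic ℝ n) (hK : ∀ i j, 0 ≤ K i j)
    (hKP : ∀ i j, K i j ≤ P i j) (s : n) : Antitone fun k => (K ^ k *ᵥ 1) s := by
  refine antitone_nat_of_succ_le fun k => ?_
  rw [pow_succ, ← mulVec_mulVec]
  exact mulVec_mono_of_nonneg (pow_apply_nonneg hK k) (mulVec_one_le_of_le_rowStochastic hP hKP) s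

theorem pow_mulVec_sub_pow_mulVec_le (hP : P ∈ rowStochastic ℝ n) (hK : ∀ i j, 0 ≤ K i j)
    (hKP : ∀ i j, K i j ≤ P i j) (c : n → ℝ) (j : ℕ) :
    P ^ j *ᵥ c - K ^ j *ᵥ c ≤ ‖c‖ • (1 - K ^ j *ᵥ 1) := by
  induction j with
  | zero => simp
  | succ j ih =>
    have hPc : P ^ j *ᵥ c ≤ ‖c‖ • 1 := fun i => by
      simpa using (abs_le.1 (abs_mulVec_apply_le_of_mem_rowStochastic (pow_mem hP j) c i)).2
    rw [pow_succ', pow_succ', ← mulVec_mulVec, ← mulVec_mulVec, ← mulVec_mulVec]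
    calc P *ᵥ (P ^ j *ᵥ c) - K *ᵥ (K ^ j *ᵥ c)
        = (P - K) *ᵥ (P ^ j *ᵥ c) + K *ᵥ (P ^ j *ᵥ c - K ^ j *ᵥ c) := by
          rw [sub_mulVec, mulVec_sub]; abel
      _ ≤ (P - K) *ᵥ (‖c‖ • 1) + K *ᵥ (‖c‖ • (1 - K ^ j *ᵥ 1)) :=
          add_le_add (mulVec_mono_of_nonneg (fun i j => sub_nonneg.2 (hKP i j)) hPc)
            (mulVec_mono_of_nonneg hK ih)
      _ = ‖c‖ • (1 - K *ᵥ (K ^ j *ᵥ 1)) := by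
          simp only [mulVec_smul, sub_mulVec, mulVec_sub, one_vecMul_of_mem_rowStochastic hP]
          module

theorem exists_pos_smul_one_le_sum_pow_mulVec (hP : P ∈ rowStochastic ℝ n) {c : n → ℝ}
    (hc : 0 ≤ c) (hpos : ∀ z, ∃ t, 0 < (P ^ t *ᵥ c) z) :
    ∃ (N : ℕ) (β : ℝ), 0 < β ∧ β • (1 : n → ℝ) ≤ ∑ j ∈ range N, P ^ j *ᵥ c := by
  choose t ht using hpos
  obtain ⟨N, hN⟩ := (eventually_all.2 fun z => eventually_gt_atTop (t z)).exists
  have hsum : ∀ z, 0 < (∑ j ∈ range N, P ^ j *ᵥ c) z := fun z => by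
    rw [Finset.sum_apply]
    refine (ht z).trans_le (Finset.single_le_sum (f := fun j => (P ^ j *ᵥ c) z) (fun j _ => ?_)
      (mem_range.2 (hN z)))
    exact mulVec_nonneg_of_nonneg (fun _ _ => nonneg_of_mem_rowStochastic (pow_mem hP j)) hc z
  obtain ⟨β, hβ, hβpos⟩ := (((eventually_all.2 fun z => eventually_lt_nhds (hsum z)).filter_mono
    nhdsWithin_le_nhds).and (self_mem_nhdsWithin (s := Set.Ioi 0))).exists
  exact ⟨N, β, hβpos, fun z => by simpa using (hβ z).le⟩

theorem mul_pow_mulVec_one_apply_le_sum (hP : P ∈ rowStochastic ℝ n) (hK : ∀ i j, 0 ≤ K i j)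
    (hKP : ∀ i j, K i j ≤ P i j) {c : n → ℝ} {N : ℕ} {β : ℝ}
    (hβ : β • (1 : n → ℝ) ≤ ∑ j ∈ range N, P ^ j *ᵥ c) (k : ℕ) (s : n) :
    β * (K ^ k *ᵥ 1) s ≤ ∑ j ∈ range N,
      ((K ^ (k + j) *ᵥ c) s + ‖c‖ * ((K ^ k *ᵥ 1) s - (K ^ (k + j) *ᵥ 1) s)) := by
  have hj : ∀ j, (K ^ k *ᵥ (P ^ j *ᵥ c)) s ≤
      (K ^ (k + j) *ᵥ c) s + ‖c‖ * ((K ^ k *ᵥ 1) s - (K ^ (k + j) *ᵥ 1) s) := fun j => by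
    have := mulVec_mono_of_nonneg (pow_apply_nonneg hK k)
      (pow_mulVec_sub_pow_mulVec_le hP hK hKP c j) s
    rw [mulVec_sub, mulVec_smul, mulVec_sub, mulVec_mulVec c (K ^ k) (K ^ j),
      mulVec_mulVec 1 (K ^ k), ← pow_add] at this
    simp only [Pi.sub_apply, Pi.smul_apply, smul_eq_mul] at this
    linarith
  calc β * (K ^ k *ᵥ 1) s = (K ^ k *ᵥ (β • 1)) s := by simp [mulVec_smul]
    _ ≤ (K ^ k *ᵥ ∑ j ∈ range N, P ^ j *ᵥ c) s := mulVec_mono_of_nonneg (pow_apply_nonneg hK k) hβ s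
    _ = ∑ j ∈ range N, (K ^ k *ᵥ (P ^ j *ᵥ c)) s := by rw [mulVec_sum, Finset.sum_apply]
    _ ≤ _ := Finset.sum_le_sum fun j _ => hj j

theorem tendsto_pow_mulVec_one_apply_of_summable (hP : P ∈ rowStochastic ℝ n)
    (hK : ∀ i j, 0 ≤ K i j) (hKP : ∀ i j, K i j ≤ P i j) {c : n → ℝ} (hc : 0 ≤ c)
    (hpos : ∀ z, ∃ t, 0 < (P ^ t *ᵥ c) z) {s : n} (hsum : Summable fun t => (K ^ t *ᵥ c) s) :
    Tendsto (fun k => (K ^ k *ᵥ 1) s) atTop (𝓝 0) := by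
  obtain ⟨N, β, hβ, hβN⟩ := exists_pos_smul_one_le_sum_pow_mulVec hP hc hpos
  set u := fun k => (K ^ k *ᵥ 1) s
  have hu : ∀ k, 0 ≤ u k := fun k => mulVec_nonneg_of_nonneg (pow_apply_nonneg hK k) zero_le_one s
  have hlim : Tendsto u atTop (𝓝 (⨅ k, u k)) :=
    tendsto_atTop_ciInf (antitone_pow_mulVec_one_apply hP hK hKP s) ⟨0, Set.forall_mem_range.2 hu⟩
  have hwindow : Tendsto (fun k => ∑ j ∈ range N,
      ((K ^ (k + j) *ᵥ c) s + ‖c‖ * (u k - u (k + j)))) atTop (𝓝 0) := by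
    simpa using tendsto_finsetSum (range N) fun j _ =>
      (hsum.tendsto_atTop_zero.comp (tendsto_add_atTop_nat j)).add
        ((hlim.sub (hlim.comp (tendsto_add_atTop_nat j))).const_mul ‖c‖)
  have hδ : β * ⨅ k, u k ≤ 0 := le_of_tendsto_of_tendsto' (hlim.const_mul β) hwindow
    (mul_pow_mulVec_one_apply_le_sum hP hK hKP hβN · s)
  have : ⨅ k, u k = 0 :=
    le_antisymm (le_of_mul_le_mul_left (by simpa using hδ) hβ) (le_ciInf hu)
  simpa [this] using hlim

end Killed

theorem hasSum_pow_mulVec_add_sub_mulVec {K : Matrix n n ℝ} {c ψ : n → ℝ} {s : n} {a : ℝ}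
    (hc : HasSum (fun t => (K ^ t *ᵥ c) s) a)
    (hψ : Tendsto (fun t => (K ^ t *ᵥ ψ) s) atTop (𝓝 0))
    (hnonneg : ∀ t, 0 ≤ (K ^ t *ᵥ (c + ψ - K *ᵥ ψ)) s) :
    HasSum (fun t => (K ^ t *ᵥ (c + ψ - K *ᵥ ψ)) s) (a + ψ s) := by
  have hstep : ∀ t, (K ^ t *ᵥ (c + ψ - K *ᵥ ψ)) s =
      (K ^ t *ᵥ c) s + ((K ^ t *ᵥ ψ) s - (K ^ (t + 1) *ᵥ ψ) s) := fun t => by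
    rw [mulVec_sub, mulVec_add, mulVec_mulVec, ← pow_succ]
    simp only [Pi.add_apply, Pi.sub_apply]
    ring
  rw [hasSum_iff_tendsto_nat_of_nonneg hnonneg]
  simp_rw [hstep, Finset.sum_add_distrib, Finset.sum_range_sub' (fun t => (K ^ t *ᵥ ψ) s)]
  simpa using hc.tendsto_sum_nat.add (tendsto_const_nhds.sub hψ)

end Matrix

section MarkovChain

variable {S : Type*}

def transitionMatrix (Q : S → S → ℝ≥0∞) : Matrix S S ℝ := Matrix.of fun x y => (Q x y).toReal

variable [DecidableEq S]

def killedMatrix (Q : S → S → ℝ≥0∞) (W : Finset S) : Matrix S S ℝ :=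
  Matrix.of fun x y => if y ∈ W then (Q x y).toReal else 0

variable {Q : S → S → ℝ≥0∞}

theorem killedMatrix_nonneg (W : Finset S) (x y : S) : 0 ≤ killedMatrix Q W x y := by
  rw [killedMatrix, of_apply]; split_ifs <;> simp

theorem killedMatrix_le_transitionMatrix (W : Finset S) (x y : S) :
    killedMatrix Q W x y ≤ transitionMatrix Q x y := by
  rw [killedMatrix, transitionMatrix, of_apply, of_apply]; split_ifs <;> simp

theorem pathProb_snoc (s : S) {t : ℕ} (path : Fin (t + 1) → S) (x : S) :
    pathProb Q s (Fin.snoc path x : Fin (t + 2) → S) =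
      pathProb Q s path * Q (path (Fin.last t)) x := by
  simp [pathProb, Fin.prod_univ_castSucc, Fin.succ_castSucc, -Fin.castSucc_succ]

variable [Fintype S]

theorem transitionMatrix_mem_rowStochastic (hQ : ∀ x, ∑ y, Q x y = 1) :
    transitionMatrix Q ∈ rowStochastic ℝ S := by
  refine mem_rowStochastic_iff_sum.2 ⟨fun _ _ => ENNReal.toReal_nonneg, fun x => ?_⟩
  have hne : ∀ y ∈ univ, Q x y ≠ ⊤ := fun y _ =>
    ENNReal.sum_ne_top.1 (hQ x ▸ ENNReal.one_ne_top) y (mem_univ y)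
  simp [transitionMatrix, ← ENNReal.toReal_sum hne, hQ x]

@[simp]
theorem killedMatrix_univ : killedMatrix Q univ = transitionMatrix Q := by
  ext; simp [killedMatrix, transitionMatrix]

theorem killedMatrix_mulVec_of_eq_zero {W : Finset S} {ψ : S → ℝ} (hψ : ∀ y ∉ W, ψ y = 0) :
    killedMatrix Q W *ᵥ ψ = transitionMatrix Q *ᵥ ψ := by
  ext x
  refine Finset.sum_congr rfl fun y _ => ?_
  by_cases hy : y ∈ W <;> simp [killedMatrix, transitionMatrix, hy, hψ]

theorem sum_pathProb_eq_killedMatrix_pow_mulVec {W : Finset S} {s : S} (hs : s ∈ W)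
    (f : S → ℝ) (t : ℕ) :
    ∑ path : Fin (t + 1) → S, (if ∀ i, path i ∈ W then
        (pathProb Q s path).toReal * f (path (Fin.last t)) else 0) =
      (killedMatrix Q W ^ t *ᵥ f) s := by
  induction t generalizing f with
  | zero =>
    rw [← (Equiv.funUnique (Fin 1) S).symm.sum_comp]
    simp [pathProb, apply_ite ENNReal.toReal, ite_mul, hs]
  | succ t ih =>
    rw [← (Fin.snocEquiv fun _ => S).sum_comp, Fintype.sum_prod_type, Finset.sum_comm, pow_succ,
      ← mulVec_mulVec, ← ih]
    refine Finset.sum_congr rfl fun path _ => ?_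
    have hmem : ∀ x, (∀ i, (Fin.snoc path x : Fin (t + 2) → S) i ∈ W) ↔
        (∀ i, path i ∈ W) ∧ x ∈ W := fun x => by simp [Fin.forall_fin_succ']
    simp only [show ∀ x, (Fin.snocEquiv fun _ => S) (x, path) = Fin.snoc path x from fun _ => rfl,
      hmem, Fin.snoc_last, pathProb_snoc, ENNReal.toReal_mul]
    by_cases hpath : ∀ i, path i ∈ W
    · simp [hpath, mulVec, dotProduct, killedMatrix, Finset.mul_sum, mul_assoc]
    · simp [hpath]

theorem pathProb_ne_top (hQ : ∀ x, ∑ y, Q x y = 1) (s : S) {t : ℕ} (path : Fin (t + 1) → S) :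
    pathProb Q s path ≠ ⊤ := by
  refine ENNReal.mul_ne_top (by split_ifs <;> simp) (ENNReal.prod_ne_top fun i _ => ?_)
  exact ENNReal.sum_ne_top.1 (hQ _ ▸ ENNReal.one_ne_top) _ (mem_univ _)

theorem hitCostE_eq_tsum (hQ : ∀ x, ∑ y, Q x y = 1) {c : S → ℝ} (hc : 0 ≤ c) {s s' : S}
    (hs : s ≠ s') : hitCostE Q (fun x => ENNReal.ofReal (c x)) s s' =
      ∑' t, ENNReal.ofReal ((killedMatrix Q {s'}ᶜ ^ t *ᵥ c) s) := by
  refine tsum_congr fun t => ?_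
  rw [← sum_pathProb_eq_killedMatrix_pow_mulVec (by simpa using hs),
    ENNReal.ofReal_sum_of_nonneg fun path _ => by
      split_ifs <;> first | positivity | exact mul_nonneg ENNReal.toReal_nonneg (hc _)]
  refine Finset.sum_congr rfl fun path _ => ?_
  simp only [Finset.mem_compl, Finset.mem_singleton]
  split_ifs <;> simp [ENNReal.ofReal_mul, ENNReal.ofReal_toReal (pathProb_ne_top hQ s path)]

theorem hitCostE_self (c : S → ℝ≥0∞) (s : S) : hitCostE Q c s s = 0 :=
  ENNReal.tsum_eq_zero.2 fun t => Finset.sum_eq_zero fun path _ => by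
    split_ifs with h
    · simp [pathProb, h 0]
    · rfl

theorem hasSum_killedMatrix_pow_mulVec_shaped (hQ : ∀ x, ∑ y, Q x y = 1) {c φ : S → ℝ}
    (hc : 0 ≤ c) (hcφ : 0 ≤ c + φ - transitionMatrix Q *ᵥ φ)
    (hpos : ∀ z, ∃ t, 0 < (transitionMatrix Q ^ t *ᵥ c) z) {s s' : S} (hs : s ≠ s')
    (hfin : hitCostE Q (fun x => ENNReal.ofReal (c x)) s s' ≠ ⊤) :
    HasSum (fun t => (killedMatrix Q {s'}ᶜ ^ t *ᵥ (c + φ - transitionMatrix Q *ᵥ φ)) s)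
      ((hitCostE Q (fun x => ENNReal.ofReal (c x)) s s').toReal + φ s - φ s') := by
  set P := transitionMatrix Q
  set K := killedMatrix Q {s'}ᶜ
  have hP : P ∈ rowStochastic ℝ S := transitionMatrix_mem_rowStochastic hQ
  have hK : ∀ i j, 0 ≤ K i j := killedMatrix_nonneg _
  have hnn : ∀ t, 0 ≤ (K ^ t *ᵥ c) s := fun t =>
    mulVec_nonneg_of_nonneg (pow_apply_nonneg hK t) hc s
  have hcost : HasSum (fun t => (K ^ t *ᵥ c) s)
      (hitCostE Q (fun x => ENNReal.ofReal (c x)) s s').toReal := by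
    rw [hitCostE_eq_tsum hQ hc hs] at hfin ⊢
    have hsum : Summable fun t => (K ^ t *ᵥ c) s :=
      (ENNReal.summable_toReal hfin).congr fun t => ENNReal.toReal_ofReal (hnn t)
    rw [← ENNReal.ofReal_tsum_of_nonneg hnn hsum, ENNReal.toReal_ofReal (tsum_nonneg hnn)]
    exact hsum.hasSum
  -- Normalising `φ` to vanish at the target turns `P` into `K` in the shaping term.
  set ψ : S → ℝ := fun x => φ x - φ s'
  have hψ : c + φ - P *ᵥ φ = c + ψ - K *ᵥ ψ := by
    have hPψ : P *ᵥ ψ = P *ᵥ φ - fun _ => φ s' := by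
      rw [show ψ = φ - fun _ => φ s' from rfl, mulVec_sub, mulVec_const_of_mem_rowStochastic hP]
    rw [killedMatrix_mulVec_of_eq_zero (by simp [ψ]), hPψ]
    ext x
    simp only [Pi.add_apply, Pi.sub_apply, ψ]
    ring
  have hsurv := tendsto_pow_mulVec_one_apply_of_summable hP hK
    (killedMatrix_le_transitionMatrix _) hc hpos hcost.summable
  have hψlim : Tendsto (fun t => (K ^ t *ᵥ ψ) s) atTop (𝓝 0) :=
    squeeze_zero_norm (fun t => (Real.norm_eq_abs _).trans_le
      (abs_mulVec_apply_le (pow_apply_nonneg hK t) ψ s)) (by simpa using hsurv.const_mul ‖ψ‖)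
  rw [hψ] at hcφ ⊢
  convert hasSum_pow_mulVec_add_sub_mulVec hcost hψlim
    (fun t => mulVec_nonneg_of_nonneg (pow_apply_nonneg hK t) hcφ s) using 1
  simp only [ψ]
  ring

theorem hitCostE_shaped_le (hQ : ∀ x, ∑ y, Q x y = 1) {c φ : S → ℝ} (hc : 0 ≤ c)
    (hcφ : 0 ≤ c + φ - transitionMatrix Q *ᵥ φ)
    (hpos : ∀ z, ∃ t, 0 < (transitionMatrix Q ^ t *ᵥ c) z) (s s' : S) :
    hitCostE Q (fun x => ENNReal.ofReal ((c + φ - transitionMatrix Q *ᵥ φ) x)) s s' ≤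
      hitCostE Q (fun x => ENNReal.ofReal (c x)) s s' + ENNReal.ofReal (φ s - φ s') := by
  rcases eq_or_ne s s' with rfl | hs
  · simp [hitCostE_self]
  set H := hitCostE Q (fun x => ENNReal.ofReal (c x)) s s'
  rcases eq_or_ne H ⊤ with htop | hfin
  · simp [htop]
  have h := hasSum_killedMatrix_pow_mulVec_shaped hQ hc hcφ hpos hs hfin
  have hnn : ∀ t, 0 ≤ (killedMatrix Q {s'}ᶜ ^ t *ᵥ (c + φ - transitionMatrix Q *ᵥ φ)) s :=
    fun t => mulVec_nonneg_of_nonneg (pow_apply_nonneg (killedMatrix_nonneg _) t) hcφ s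
  rw [hitCostE_eq_tsum hQ hcφ hs, ← ENNReal.ofReal_tsum_of_nonneg hnn h.summable, h.tsum_eq,
    add_sub_assoc]
  exact ENNReal.ofReal_add_le.trans_eq (by rw [ENNReal.ofReal_toReal hfin])

theorem ofReal_sub_le_hitCostE (hQ : ∀ x, ∑ y, Q x y = 1) {c φ : S → ℝ} (hc : 0 ≤ c)
    (hcφ : 0 ≤ c + φ - transitionMatrix Q *ᵥ φ)
    (hpos : ∀ z, ∃ t, 0 < (transitionMatrix Q ^ t *ᵥ c) z) (s s' : S) :
    ENNReal.ofReal (φ s' - φ s) ≤ hitCostE Q (fun x => ENNReal.ofReal (c x)) s s' := by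
  rcases eq_or_ne s s' with rfl | hs
  · simp
  set H := hitCostE Q (fun x => ENNReal.ofReal (c x)) s s'
  rcases eq_or_ne H ⊤ with htop | hfin
  · simp [htop]
  have h0 : 0 ≤ H.toReal + φ s - φ s' :=
    (hasSum_killedMatrix_pow_mulVec_shaped hQ hc hcφ hpos hs hfin).nonneg fun t =>
      mulVec_nonneg_of_nonneg (pow_apply_nonneg (killedMatrix_nonneg _) t) hcφ s
  calc ENNReal.ofReal (φ s' - φ s) ≤ ENNReal.ofReal H.toReal :=
        ENNReal.ofReal_le_ofReal (by linarith)
    _ = H := ENNReal.ofReal_toReal hfin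

end MarkovChain

section MDP

variable {S A : Type*} [Fintype S] {p : S → A → S → ℝ≥0∞}

theorem shapedRbar_comp_eq (rbar : S → A → ℝ) (φ : S → ℝ) (π : S → A) :
    (fun x => shapedRbar p rbar φ x (π x)) =
      (fun x => rbar x (π x)) - φ + transitionMatrix (polKernel p π) *ᵥ φ := by
  ext x; simp [shapedRbar, transitionMatrix, polKernel, mulVec, dotProduct]

@[simp]
theorem shapedRbar_zero (rbar : S → A → ℝ) : shapedRbar p rbar 0 = rbar := by
  ext; simp [shapedRbar]

theorem shapedRbar_shapedRbar_neg (rbar : S → A → ℝ) (φ : S → ℝ) :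
    shapedRbar p (shapedRbar p rbar φ) (-φ) = rbar := by
  ext s a
  simp only [shapedRbar, Pi.neg_apply, mul_neg, Finset.sum_neg_distrib]
  ring

theorem cost_shapedRbar_eq (rmax : ℝ) (rbar : S → A → ℝ) (φ : S → ℝ) (π : S → A) :
    (fun x => rmax - shapedRbar p rbar φ x (π x)) =
      (fun x => rmax - rbar x (π x)) + φ - transitionMatrix (polKernel p π) *ᵥ φ := by
  ext x
  have := congrFun (shapedRbar_comp_eq (p := p) rbar φ π) x
  simp only [Pi.add_apply, Pi.sub_apply] at this ⊢
  linarith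

variable [DecidableEq S]

theorem expRewardAt_eq (rbar : S → A → ℝ) (π : S → A) (s : S) (t : ℕ) :
    expRewardAt p rbar π s t =
      (transitionMatrix (polKernel p π) ^ t *ᵥ fun x => rbar x (π x)) s := by
  rw [← killedMatrix_univ, ← sum_pathProb_eq_killedMatrix_pow_mulVec (mem_univ s)]
  simp [expRewardAt]

theorem expRewardAt_shapedRbar (rbar : S → A → ℝ) (φ : S → ℝ) (π : S → A) (s : S) (t : ℕ) :
    expRewardAt p (shapedRbar p rbar φ) π s t = expRewardAt p rbar π s t +
      ((transitionMatrix (polKernel p π) ^ (t + 1) *ᵥ φ) s -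
        (transitionMatrix (polKernel p π) ^ t *ᵥ φ) s) := by
  rw [expRewardAt_eq, expRewardAt_eq, shapedRbar_comp_eq, mulVec_add, mulVec_sub, mulVec_mulVec,
    ← pow_succ]
  simp only [Pi.add_apply, Pi.sub_apply]
  ring

theorem gain_eq_of_forall_expRewardAt_shapedRbar_eq (hp : ∀ s a, ∑ s', p s a s' = 1)
    {rbar : S → A → ℝ} {φ : S → ℝ} {π : S → A} {z : S} {r : ℝ}
    (h : ∀ t, expRewardAt p (shapedRbar p rbar φ) π z t = r) : gain p rbar π z = r := by
  set P := transitionMatrix (polKernel p π)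
  have hP : P ∈ rowStochastic ℝ S := transitionMatrix_mem_rowStochastic fun x => hp x (π x)
  set e : ℕ → ℝ := fun T => ((P ^ T *ᵥ φ) z - φ z) / T
  have havg : ∀ T ≠ 0, avgSeq p rbar π z T = r - e T := fun T hT => by
    have hsum : ∑ t ∈ range T, expRewardAt p rbar π z t = T * r - ((P ^ T *ᵥ φ) z - φ z) := by
      have hstep : ∀ t, expRewardAt p rbar π z t = r - ((P ^ (t + 1) *ᵥ φ) z - (P ^ t *ᵥ φ) z) :=
        fun t => by rw [← h t, expRewardAt_shapedRbar]; ring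
      rw [Finset.sum_congr rfl fun t _ => hstep t, Finset.sum_sub_distrib,
        Finset.sum_range_sub (fun t => (P ^ t *ᵥ φ) z)]
      simp
    simp only [avgSeq, hsum, e]
    field_simp
  have he : Tendsto e atTop (𝓝 0) := by
    refine squeeze_zero_norm (fun T => ?_) (tendsto_const_div_atTop_nhds_zero_nat (2 * ‖φ‖))
    rw [Real.norm_eq_abs, abs_div, Nat.abs_cast]
    gcongr
    calc |(P ^ T *ᵥ φ) z - φ z| ≤ |(P ^ T *ᵥ φ) z| + |φ z| := abs_sub _ _
      _ ≤ ‖φ‖ + ‖φ‖ := add_le_add (abs_mulVec_apply_le_of_mem_rowStochastic (pow_mem hP T) φ z)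
          (norm_le_pi_norm φ z)
      _ = 2 * ‖φ‖ := by ring
  refine Tendsto.limsup_eq ?_
  simpa using (tendsto_const_nhds.sub he).congr'
    ((eventually_ne_atTop 0).mono fun T hT => (havg T hT).symm)

theorem gain_le_optGain [Finite A] (rbar : S → A → ℝ) (π : S → A) (s : S) :
    gain p rbar π s ≤ optGain p rbar :=
  le_ciSup_of_le (Set.finite_range _).bddAbove s
    (le_ciSup (f := fun π => gain p rbar π s) (Set.finite_range _).bddAbove π)

theorem exists_pos_pow_mulVec_cost [Finite A] (hp : ∀ s a, ∑ s', p s a s' = 1) {rmax : ℝ}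
    {rbar : S → A → ℝ} {φ : S → ℝ} (hφ : ∀ s a, shapedRbar p rbar φ s a ≤ rmax)
    (hρ : optGain p rbar < rmax) (π : S → A) (z : S) :
    ∃ t, 0 < (transitionMatrix (polKernel p π) ^ t *ᵥ
      fun x => rmax - shapedRbar p rbar φ x (π x)) z := by
  have hP := transitionMatrix_mem_rowStochastic (Q := polKernel p π) fun x => hp x (π x)
  by_contra! h
  have hexp : ∀ t, expRewardAt p (shapedRbar p rbar φ) π z t = rmax := fun t => by
    have hle := h t
    have hnn := nonneg_mulVec_of_mem_rowStochastic (pow_mem hP t)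
      (fun x => sub_nonneg.2 (hφ x (π x))) z
    rw [show (fun x => rmax - shapedRbar p rbar φ x (π x)) =
      (fun _ => rmax) - fun x => shapedRbar p rbar φ x (π x) from rfl, mulVec_sub,
      mulVec_const_of_mem_rowStochastic (pow_mem hP t)] at hle hnn
    simp only [Pi.sub_apply, ← expRewardAt_eq] at hle hnn
    linarith
  linarith [(gain_eq_of_forall_expRewardAt_shapedRbar_eq hp hexp).symm.trans_le
    (gain_le_optGain rbar π z)]

theorem mehc_shapedRbar_le (hp : ∀ s a, ∑ s', p s a s' = 1) {rmax : ℝ} {rbar : S → A → ℝ}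
    {φ : S → ℝ} (hr : ∀ s a, rbar s a ≤ rmax) (hφ : ∀ s a, shapedRbar p rbar φ s a ≤ rmax)
    (hpos : ∀ π z, ∃ t, 0 < (transitionMatrix (polKernel p π) ^ t *ᵥ
      fun x => rmax - rbar x (π x)) z) :
    mehc p rmax (shapedRbar p rbar φ) ≤ 2 * mehc p rmax rbar := by
  have hQ : ∀ π x, ∑ y, polKernel p π x y = 1 := fun π x => hp x (π x)
  have hc : ∀ π : S → A, 0 ≤ fun x => rmax - rbar x (π x) := fun π x => sub_nonneg.2 (hr x (π x))
  have hcφ : ∀ π : S → A,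
      0 ≤ (fun x => rmax - rbar x (π x)) + φ - transitionMatrix (polKernel p π) *ᵥ φ :=
    fun π => cost_shapedRbar_eq rmax rbar φ π ▸ fun x => sub_nonneg.2 (hφ x (π x))
  have hκ : ∀ s s', ⨅ π : S → A, hitCostE (polKernel p π)
      (fun x => ENNReal.ofReal (rmax - rbar x (π x))) s s' ≤ mehc p rmax rbar := fun s s' =>
    le_iSup₂ (f := fun s s' => ⨅ π : S → A, hitCostE (polKernel p π)
      (fun x => ENNReal.ofReal (rmax - rbar x (π x))) s s') s s'
  refine iSup₂_le fun s s' => ?_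
  simp only [fun π x => congrFun (cost_shapedRbar_eq (p := p) rmax rbar φ π) x]
  refine (iInf_mono fun π => hitCostE_shaped_le (hQ π) (hc π) (hcφ π) (hpos π) s s').trans ?_
  rw [← ENNReal.iInf_add, two_mul]
  exact add_le_add (hκ s s') ((le_iInf fun π =>
    ofReal_sub_le_hitCostE (hQ π) (hc π) (hcφ π) (hpos π) s' s).trans (hκ s' s))

end MDP

theorem stmt13_general {S A : Type*} [Fintype S] [DecidableEq S] [Fintype A]
    (p : S → A → S → ℝ≥0∞) (hp : ∀ s a, ∑ s', p s a s' = 1)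
    (rmax : ℝ)
    (rbar : S → A → ℝ) (hr : ∀ s a, rbar s a ∈ Set.Icc 0 rmax)
    (hρ : optGain p rbar < rmax)
    (φ : S → ℝ)
    (hφbdd : ∀ s a, shapedRbar p rbar φ s a ∈ Set.Icc 0 rmax) :
    mehc p rmax rbar / 2 ≤ mehc p rmax (shapedRbar p rbar φ)
    ∧ mehc p rmax (shapedRbar p rbar φ) ≤ 2 * mehc p rmax rbar := by
  have hr' : ∀ s a, rbar s a ≤ rmax := fun s a => (hr s a).2
  have hφ' : ∀ s a, shapedRbar p rbar φ s a ≤ rmax := fun s a => (hφbdd s a).2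
  have hpos := exists_pos_pow_mulVec_cost hp (φ := 0) (by simpa using hr') hρ
  have hposφ := exists_pos_pow_mulVec_cost hp hφ' hρ
  simp only [shapedRbar_zero] at hpos
  have hlower := mehc_shapedRbar_le hp (φ := -φ) hφ'
    (by simpa [shapedRbar_shapedRbar_neg] using hr') hposφ
  rw [shapedRbar_shapedRbar_neg] at hlower
  exact ⟨ENNReal.div_le_of_le_mul' hlower, mehc_shapedRbar_le hp hr' hφ' hpos⟩

/-- for an MDP with finite MEHC and unsaturated optimal average reward,
potential-based reward shaping changes the MEHC by at most a factor of two: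
`κ(M)/2 ≤ κ(M^φ) ≤ 2·κ(M)`. -/
theorem stmt13 {S A : Type*} [Fintype S] [DecidableEq S] [Nonempty S] [Fintype A]
    [Nonempty A]
    (p : S → A → S → ℝ≥0∞) (hp : ∀ s a, ∑ s', p s a s' = 1)
    (rmax : ℝ) (hrmax : 0 ≤ rmax)
    (rbar : S → A → ℝ) (hr : ∀ s a, rbar s a ∈ Set.Icc 0 rmax)
    (hκfin : mehc p rmax rbar ≠ ⊤)
    (hρ : optGain p rbar < rmax)
    (φ : S → ℝ)
    (hφbdd : ∀ s a, shapedRbar p rbar φ s a ∈ Set.Icc 0 rmax) :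
    mehc p rmax rbar / 2 ≤ mehc p rmax (shapedRbar p rbar φ)
    ∧ mehc p rmax (shapedRbar p rbar φ) ≤ 2 * mehc p rmax rbar :=
  stmt13_general p hp rmax rbar hr hρ φ hφbdd
end
end
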